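/- Let H₂ be a Hilbert space and K, K̇ : H₁ → H₂ bounded linear operators from a normed space H₁. Suppose f₀ ∈ H₁ with ĩ := inf_{g∈H₁} ‖K̇ f₀ + K g‖² > 0, and there is D > 0 such that the remainder R(θ,f) := K_θ f − K_{θ₀} f₀ − (θ−θ₀)K̇ f₀ − K(f−f₀) satisfies ‖R(θ,f)‖ ≤ D(|θ−θ₀|² + |θ−θ₀|·‖f−f₀‖). Then for all (θ,f) with 0 < |θ−θ₀| + ‖f−f₀‖ < ĩ^{1/2}/(2D) and θ ≠ θ₀: ‖K_θ f − K_{θ₀} f₀‖ ≥ (ĩ^{1/2}/2)·|θ−θ₀|. -/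

import Mathlib

/-- Local identifiability lower bound: if `ĩ > 0` lower-bounds `‖K̇f₀ + Kg‖²` over all
directions `g`, and the Taylor remainder `R(θ,f) = T θ f − T θ₀ f₀ − (θ−θ₀)K̇f₀ − K(f−f₀)`
satisfies `‖R(θ,f)‖ ≤ D(|θ−θ₀|² + |θ−θ₀|‖f−f₀‖)`, then in the neighbourhood
`|θ−θ₀| + ‖f−f₀‖ < ĩ^{1/2}/(2D)` (with `θ ≠ θ₀`) one has
`‖T θ f − T θ₀ f₀‖ ≥ (ĩ^{1/2}/2)|θ−θ₀|`. -/
theorem local_identifiability_lower_bound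
    {H₁ H₂ : Type*} [NormedAddCommGroup H₁] [NormedSpace ℝ H₁]
    [NormedAddCommGroup H₂] [NormedSpace ℝ H₂]
    (K Kdot : H₁ →L[ℝ] H₂) (T : ℝ → H₁ → H₂) (θ₀ : ℝ) (f₀ : H₁)
    (itilde D : ℝ) (hitilde : 0 < itilde) (hD : 0 < D)
    (hinf : ∀ g : H₁, itilde ≤ ‖Kdot f₀ + K g‖ ^ 2)
    (hR : ∀ (θ : ℝ) (f : H₁),
      ‖T θ f - T θ₀ f₀ - (θ - θ₀) • Kdot f₀ - K (f - f₀)‖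
        ≤ D * (|θ - θ₀| ^ 2 + |θ - θ₀| * ‖f - f₀‖)) :
    ∀ (θ : ℝ) (f : H₁), θ ≠ θ₀ →
      0 < |θ - θ₀| + ‖f - f₀‖ →
      |θ - θ₀| + ‖f - f₀‖ < Real.sqrt itilde / (2 * D) →
      ‖T θ f - T θ₀ f₀‖ ≥ (Real.sqrt itilde / 2) * |θ - θ₀| := by
  intro θ f hθ hpos hsmall
  set t := θ - θ₀ with ht
  have htne : t ≠ 0 := sub_ne_zero.mpr hθ
  have htpos : 0 < |t| := abs_pos.mpr htne
  have hsq : 0 ≤ Real.sqrt itilde := Real.sqrt_nonneg _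
  -- main term lower bound
  have hmain : |t| * Real.sqrt itilde ≤ ‖t • Kdot f₀ + K (f - f₀)‖ := by
    have hg := hinf (t⁻¹ • (f - f₀))
    have : Real.sqrt itilde ≤ ‖Kdot f₀ + K (t⁻¹ • (f - f₀))‖ := by
      have := Real.sqrt_le_sqrt hg
      rwa [Real.sqrt_sq (norm_nonneg _)] at this
    calc |t| * Real.sqrt itilde ≤ |t| * ‖Kdot f₀ + K (t⁻¹ • (f - f₀))‖ := by
          exact mul_le_mul_of_nonneg_left this (le_of_lt htpos)
      _ = ‖t • (Kdot f₀ + K (t⁻¹ • (f - f₀)))‖ := by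
          rw [norm_smul]; simp [Real.norm_eq_abs]
      _ = ‖t • Kdot f₀ + K (f - f₀)‖ := by
          rw [smul_add, map_smul, smul_smul, mul_inv_cancel₀ htne, one_smul]
  -- remainder bound
  have hRb := hR θ f
  have hnorm : ‖t • Kdot f₀ + K (f - f₀)‖ - ‖T θ f - T θ₀ f₀ - t • Kdot f₀ - K (f - f₀)‖
      ≤ ‖T θ f - T θ₀ f₀‖ := by
    have heq : T θ f - T θ₀ f₀ - (T θ f - T θ₀ f₀ - t • Kdot f₀ - K (f - f₀))
        = t • Kdot f₀ + K (f - f₀) := by abel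
    have h := norm_sub_le (T θ f - T θ₀ f₀) (T θ f - T θ₀ f₀ - t • Kdot f₀ - K (f - f₀))
    rw [heq] at h
    linarith
  have hDsum : D * (|t| ^ 2 + |t| * ‖f - f₀‖) = |t| * (D * (|t| + ‖f - f₀‖)) := by ring
  have hsmall' : D * (|t| + ‖f - f₀‖) < Real.sqrt itilde / 2 := by
    have h2D : 0 < 2 * D := by linarith
    calc D * (|t| + ‖f - f₀‖) < D * (Real.sqrt itilde / (2 * D)) :=
          mul_lt_mul_of_pos_left hsmall hD
      _ = Real.sqrt itilde / 2 := by field_simp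
  have : |t| * Real.sqrt itilde - |t| * (D * (|t| + ‖f - f₀‖)) ≤ ‖T θ f - T θ₀ f₀‖ := by
    rw [← hDsum]; linarith
  have hfin : Real.sqrt itilde / 2 * |t| ≤ |t| * Real.sqrt itilde - |t| * (D * (|t| + ‖f - f₀‖)) := by
    nlinarith [hsmall', htpos]
  linarith
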